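/- Define on (ℂ²)^{⊗3} the binary observables O₁ := Σ_{i∈{0,1}} |i⟩⟨i|⊗σ_Z^i⊗σ_X, O₂ := Σ_{i∈{0,1}} |i⟩⟨i|⊗σ_X⊗σ_Z^i, O₃ := σ_X⊗(Σ_{i∈{0,1}} |i⟩⟨i|⊗σ_Z^i), and for a binary observable O let O^{(s)} := (I+(−1)^s O)/2. Then for all s₁,s₂,s₃ ∈ {0,1}, the rank-one projector onto the Z-rotated entangled magic state satisfies |φ_H^{(s₁,s₂,s₃)}⟩⟨φ_H^{(s₁,s₂,s₃)}| = O₃^{(s₁)} O₂^{(s₂)} O₁^{(s₃)}. -/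

import Mathlib

open Matrix Kronecker

noncomputable section

/-- Three-qubit index type. -/
abbrev Q3 := Fin 2 × Fin 2 × Fin 2

/-- `|+⟩ = (|0⟩+|1⟩)/√2`. -/
def ketP : Fin 2 → ℂ := fun _ => (Real.sqrt 2 : ℂ)⁻¹

/-- `|+⟩^{⊗3}`. -/
def plus3 : Q3 → ℂ := fun p => ketP p.1 * ketP p.2.1 * ketP p.2.2

/-- The `CCZ` gate: `CCZ|a,b,c⟩ = (−1)^{abc}|a,b,c⟩`. -/
def CCZ : Matrix Q3 Q3 ℂ :=
  Matrix.diagonal fun p => (-1 : ℂ) ^ (p.1.val * p.2.1.val * p.2.2.val)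

/-- Pauli `Z`. -/
def sZ : Matrix (Fin 2) (Fin 2) ℂ := !![1, 0; 0, -1]

/-- Pauli `X`. -/
def sX : Matrix (Fin 2) (Fin 2) ℂ := !![0, 1; 1, 0]

/-- The Z-rotated entangled magic states
`|φ_H^{(s₁,s₂,s₃)}⟩ = (σ_Z^{s₁}⊗σ_Z^{s₂}⊗σ_Z^{s₃})·CCZ|+⟩^{⊗3}`. -/
def phiH (s₁ s₂ s₃ : Fin 2) : Q3 → ℂ :=
  ((sZ ^ s₁.val) ⊗ₖ ((sZ ^ s₂.val) ⊗ₖ (sZ ^ s₃.val))).mulVec (CCZ.mulVec plus3)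

/-- `|i⟩⟨i|` on one qubit. -/
def projZ (i : Fin 2) : Matrix (Fin 2) (Fin 2) ℂ := Matrix.single i i 1

/-- `O₁ := Σ_i |i⟩⟨i|⊗σ_Z^i⊗σ_X`. -/
def O1 : Matrix Q3 Q3 ℂ := ∑ i : Fin 2, projZ i ⊗ₖ ((sZ ^ i.val) ⊗ₖ sX)

/-- `O₂ := Σ_i |i⟩⟨i|⊗σ_X⊗σ_Z^i`. -/
def O2 : Matrix Q3 Q3 ℂ := ∑ i : Fin 2, projZ i ⊗ₖ (sX ⊗ₖ (sZ ^ i.val))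

/-- `O₃ := σ_X⊗(Σ_i |i⟩⟨i|⊗σ_Z^i)`. -/
def O3 : Matrix Q3 Q3 ℂ := ∑ i : Fin 2, sX ⊗ₖ (projZ i ⊗ₖ (sZ ^ i.val))

/-- `O^{(s)} := (I+(−1)^s O)/2`, the projector onto the `(−1)^s`-eigenspace of a binary
observable `O`. -/
def pproj {m : Type*} [Fintype m] [DecidableEq m] (O : Matrix m m ℂ) (s : Fin 2) :
    Matrix m m ℂ :=
  (2 : ℂ)⁻¹ • (1 + ((-1 : ℂ) ^ s.val) • O)
lemma sZ_pow (s : Fin 2) : sZ ^ s.val = Matrix.diagonal (fun b : Fin 2 => (-1:ℂ)^(s.val*b.val)) := by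
  fin_cases s <;> · ext a b; fin_cases a <;> fin_cases b <;> simp [sZ, pow_succ]

lemma csqrt2 : ((Real.sqrt 2 : ℝ) : ℂ)⁻¹ * ((Real.sqrt 2 : ℝ) : ℂ)⁻¹ = 2⁻¹ := by
  rw [← mul_inv]; norm_cast; rw [Real.mul_self_sqrt] <;> norm_num

/-- abbreviate amplitude -/
def amp : ℂ := ((Real.sqrt 2 : ℝ) : ℂ)⁻¹

lemma phiH_apply (s₁ s₂ s₃ : Fin 2) (p : Q3) :
    phiH s₁ s₂ s₃ p =
      (-1:ℂ)^(s₁.val*p.1.val + s₂.val*p.2.1.val + s₃.val*p.2.2.val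
        + p.1.val*p.2.1.val*p.2.2.val) * (amp*amp*amp) := by
  simp only [phiH, sZ_pow, Matrix.diagonal_kronecker_diagonal, Matrix.mulVec_diagonal, CCZ,
    plus3, ketP, amp]
  ring_nf
  try rw [← pow_add]
  try ring

/-- explicit entries -/
lemma O1_apply (p q : Q3) : O1 p q =
    (if p.1 = q.1 then 1 else 0) * (if p.2.1 = q.2.1 then (-1:ℂ)^(p.1.val*p.2.1.val) else 0)
      * sX p.2.2 q.2.2 := by
  obtain ⟨a,b,c⟩ := p; obtain ⟨d,e,f⟩ := q
  simp only [O1, sZ_pow, Finset.sum_apply, Matrix.sum_apply, Fin.sum_univ_two,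
    Matrix.kroneckerMap_apply, projZ, Matrix.single, Matrix.diagonal, Matrix.of_apply]
  fin_cases a <;> fin_cases d <;> fin_cases b <;> fin_cases e <;> simp

lemma O2_apply (p q : Q3) : O2 p q =
    (if p.1 = q.1 then 1 else 0) * sX p.2.1 q.2.1
      * (if p.2.2 = q.2.2 then (-1:ℂ)^(p.1.val*p.2.2.val) else 0) := by
  obtain ⟨a,b,c⟩ := p; obtain ⟨d,e,f⟩ := q
  simp only [O2, sZ_pow, Finset.sum_apply, Matrix.sum_apply, Fin.sum_univ_two,
    Matrix.kroneckerMap_apply, projZ, Matrix.single, Matrix.diagonal, Matrix.of_apply]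
  fin_cases a <;> fin_cases d <;> fin_cases c <;> fin_cases f <;> simp

lemma O3_apply (p q : Q3) : O3 p q =
    sX p.1 q.1 * (if p.2.1 = q.2.1 then 1 else 0)
      * (if p.2.2 = q.2.2 then (-1:ℂ)^(p.2.1.val*p.2.2.val) else 0) := by
  obtain ⟨a,b,c⟩ := p; obtain ⟨d,e,f⟩ := q
  simp only [O3, sZ_pow, Finset.sum_apply, Matrix.sum_apply, Fin.sum_univ_two,
    Matrix.kroneckerMap_apply, projZ, Matrix.single, Matrix.diagonal, Matrix.of_apply]
  fin_cases b <;> fin_cases e <;> fin_cases c <;> fin_cases f <;> simp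

lemma amp6 : amp^6 = 8⁻¹ := by
  have h1 : amp*amp = 2⁻¹ := csqrt2
  have h : amp^6 = (amp*amp)*(amp*amp)*(amp*amp) := by ring
  rw [h, h1]; norm_num

lemma star_phiH_apply (s₁ s₂ s₃ : Fin 2) (p : Q3) :
    star (phiH s₁ s₂ s₃) p =
      (-1:ℂ)^(s₁.val*p.1.val + s₂.val*p.2.1.val + s₃.val*p.2.2.val
        + p.1.val*p.2.1.val*p.2.2.val) * (amp*amp*amp) := by
  simp [phiH_apply, amp, ← Complex.ofReal_inv]

lemma vecMulVec_phiH_apply (s₁ s₂ s₃ : Fin 2) (p q : Q3) :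
    Matrix.vecMulVec (phiH s₁ s₂ s₃) (star (phiH s₁ s₂ s₃)) p q =
      (-1:ℂ)^((s₁.val*p.1.val + s₂.val*p.2.1.val + s₃.val*p.2.2.val
          + p.1.val*p.2.1.val*p.2.2.val)
        + (s₁.val*q.1.val + s₂.val*q.2.1.val + s₃.val*q.2.2.val
          + q.1.val*q.2.1.val*q.2.2.val)) * 8⁻¹ := by
  rw [Matrix.vecMulVec_apply, phiH_apply, star_phiH_apply,
    show ∀ x y : ℂ, (x*(amp*amp*amp))*(y*(amp*amp*amp)) = x*y*(amp^6) from fun x y => by ring,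
    amp6, ← pow_add]

set_option maxHeartbeats 1000000000 in
/-- The projector onto `|φ_H^{(s₁,s₂,s₃)}⟩` equals `O₃^{(s₁)} O₂^{(s₂)} O₁^{(s₃)}`. -/
theorem phiH_projector_eq_stabilizer_projectors :
    ∀ s₁ s₂ s₃ : Fin 2,
      Matrix.vecMulVec (phiH s₁ s₂ s₃) (star (phiH s₁ s₂ s₃))
        = pproj O3 s₁ * pproj O2 s₂ * pproj O1 s₃ := by
  intro s₁ s₂ s₃
  ext ⟨a,b,c⟩ ⟨d,e,f⟩
  fin_cases s₁ <;> fin_cases s₂ <;> fin_cases s₃ <;>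
  fin_cases a <;> fin_cases b <;> fin_cases c <;> fin_cases d <;> fin_cases e <;> fin_cases f <;>
  · simp (config := { decide := true }) only [vecMulVec_phiH_apply, pproj, Matrix.mul_apply,
      Fintype.sum_prod_type, Fin.sum_univ_two, Matrix.smul_apply, Matrix.add_apply,
      Matrix.one_apply, O1_apply, O2_apply, O3_apply, sX, smul_eq_mul,
      if_false, ite_false, if_true, ite_true, Prod.mk.injEq, mul_ite, ite_mul,
      mul_zero, zero_mul, mul_one, one_mul, and_true, and_false, true_and, false_and,
      add_zero, zero_add, neg_zero, neg_neg, pow_zero, Matrix.cons_val_zero,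
      Matrix.cons_val_one, Matrix.head_cons, Matrix.of_apply, Matrix.cons_val',
      Matrix.empty_val', Matrix.cons_val_fin_one, Matrix.head_fin_const]
    norm_num
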